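/- arXiv:2010.09174 — 4 statements merged into one kernel-verified Lean document; each statement's English description precedes it below -/
import Mathlib

section
/- Under the GP posterior setup, suppose the observations satisfy Y_i = ⟪φ(θ_i), w⟫ + ε_i for some w ∈ E with ‖w‖ ≤ B and noise satisfying |ε_i| ≤ η for i = 1, …, N. Then Yᵀ (K + η² I_N)⁻¹ Y ≤ B² + N; in particular B² + N − Yᵀ (K + η² I_N)⁻¹ Y ≥ 0, so the confidence-width parameter β = √(B² + N − Yᵀ (K + η² I_N)⁻¹ Y) is a well-defined nonnegative real number. -/
open Matrix RealInnerProductSpace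

/-!
With `x := (K + η² I)⁻¹ Y` and `s := ∑ᵢ xᵢ φ(θᵢ)`, the quadratic form `Yᵀ (K + η² I)⁻¹ Y = xᵀ Y`
can be evaluated in two ways. Through `(K + η² I) x = Y` it equals `‖s‖² + η² ‖x‖²`; through
the observation model it equals `⟪s, w⟫ + xᵀ ε`. Bounding `2⟪s, w⟫ ≤ ‖s‖² + B²` and
`2 xᵀ ε ≤ η² ‖x‖² + N` (AM-GM coordinatewise, using `|εᵢ| ≤ η`) gives
`2 xᵀ Y ≤ xᵀ Y + B² + N`.
-/

namespace Matrix

variable {ι : Type*} [Fintype ι]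

lemma dotProduct_gram_mulVec_self {E : Type*} [NormedAddCommGroup E] [InnerProductSpace ℝ E]
    (v : ι → E) (x : ι → ℝ) : x ⬝ᵥ (gram ℝ v *ᵥ x) = ‖∑ i, x i • v i‖ ^ 2 := by
  simpa [real_inner_self_eq_norm_sq] using star_dotProduct_gram_mulVec (𝕜 := ℝ) v x x

lemma two_mul_dotProduct_le_of_abs_le {x ε : ι → ℝ} {η : ℝ} (hε : ∀ i, |ε i| ≤ η) :
    2 * (x ⬝ᵥ ε) ≤ η ^ 2 * (x ⬝ᵥ x) + Fintype.card ι := by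
  have hterm : ∀ i, 2 * (x i * ε i) ≤ η ^ 2 * (x i * x i) + 1 := fun i =>
    calc 2 * (x i * ε i) ≤ 2 * (η * |x i|) * 1 := by
          have : x i * ε i ≤ |x i| * η :=
            (le_abs_self _).trans (abs_mul (x i) (ε i) ▸
              mul_le_mul_of_nonneg_left (hε i) (abs_nonneg _))
          linarith
      _ ≤ (η * |x i|) ^ 2 + 1 ^ 2 := two_mul_le_add_sq _ _
      _ = η ^ 2 * (x i * x i) + 1 := by rw [mul_pow, sq_abs]; ring
  calc 2 * (x ⬝ᵥ ε) = ∑ i, 2 * (x i * ε i) := Finset.mul_sum _ _ _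
    _ ≤ ∑ i, (η ^ 2 * (x i * x i) + 1) := Finset.sum_le_sum fun i _ => hterm i
    _ = η ^ 2 * (x ⬝ᵥ x) + Fintype.card ι := by
      simp [Finset.sum_add_distrib, ← Finset.mul_sum, dotProduct]

theorem dotProduct_le_of_gram_add_smul_one_mulVec_eq [DecidableEq ι]
    {E : Type*} [NormedAddCommGroup E] [InnerProductSpace ℝ E]
    (v : ι → E) {w : E} {B η : ℝ} (hw : ‖w‖ ≤ B) {ε Y x : ι → ℝ}
    (hε : ∀ i, |ε i| ≤ η) (hY : ∀ i, Y i = ⟪v i, w⟫ + ε i)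
    (hx : (gram ℝ v + η ^ 2 • 1) *ᵥ x = Y) :
    x ⬝ᵥ Y ≤ B ^ 2 + Fintype.card ι := by
  set s := ∑ i, x i • v i
  have hridge : x ⬝ᵥ Y = ‖s‖ ^ 2 + η ^ 2 * (x ⬝ᵥ x) := by
    rw [← hx, add_mulVec, dotProduct_add, dotProduct_gram_mulVec_self, smul_mulVec, one_mulVec,
      dotProduct_smul, smul_eq_mul]
  have hobs : x ⬝ᵥ Y = ⟪s, w⟫ + x ⬝ᵥ ε := by
    simp only [s, sum_inner, dotProduct, hY, real_inner_smul_left, mul_add,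
      Finset.sum_add_distrib]
  have hsignal : 2 * ⟪s, w⟫ ≤ ‖s‖ ^ 2 + B ^ 2 :=
    calc 2 * ⟪s, w⟫ ≤ 2 * ‖s‖ * B := by
          linarith [(real_inner_le_norm s w).trans (mul_le_mul_of_nonneg_left hw (norm_nonneg s))]
      _ ≤ ‖s‖ ^ 2 + B ^ 2 := two_mul_le_add_sq _ _
  linarith [two_mul_dotProduct_le_of_abs_le (x := x) hε]

end Matrix

theorem gp_quadratic_form_bound_general
    {Θ : Type*} {E : Type*}
    [NormedAddCommGroup E] [InnerProductSpace ℝ E]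
    (φ : Θ → E) (k : Θ → Θ → ℝ)
    (hk : ∀ θ θ' : Θ, k θ θ' = ⟪φ θ, φ θ'⟫)
    {N : ℕ} (θi : Fin N → Θ)
    (K : Matrix (Fin N) (Fin N) ℝ)
    (hK : ∀ i j, K i j = k (θi i) (θi j))
    (η : ℝ) (hη : 0 < η)
    (Y : Fin N → ℝ) (w : E) (B : ℝ) (hw : ‖w‖ ≤ B)
    (ε : Fin N → ℝ) (hε : ∀ i, |ε i| ≤ η)
    (hY : ∀ i, Y i = ⟪φ (θi i), w⟫ + ε i) :
    Y ⬝ᵥ ((K + η ^ 2 • 1)⁻¹ *ᵥ Y) ≤ B ^ 2 + N ∧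
      0 ≤ B ^ 2 + N - Y ⬝ᵥ ((K + η ^ 2 • 1)⁻¹ *ᵥ Y) := by
  obtain rfl : K = gram ℝ (φ ∘ θi) := by ext i j; simp [hK, hk]
  have hpos : (gram ℝ (φ ∘ θi) + η ^ 2 • 1).PosDef :=
    PosDef.posSemidef_add (posSemidef_gram ℝ _) (PosDef.one.smul (pow_pos hη 2))
  have hsolve : (gram ℝ (φ ∘ θi) + η ^ 2 • 1) *ᵥ ((gram ℝ (φ ∘ θi) + η ^ 2 • 1)⁻¹ *ᵥ Y) = Y := by
    rw [mulVec_mulVec, mul_nonsing_inv _ hpos.det_pos.ne'.isUnit, one_mulVec]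
  have hle : Y ⬝ᵥ ((gram ℝ (φ ∘ θi) + η ^ 2 • 1)⁻¹ *ᵥ Y) ≤ B ^ 2 + N := by
    rw [dotProduct_comm]
    simpa using dotProduct_le_of_gram_add_smul_one_mulVec_eq (φ ∘ θi) hw hε hY hsolve
  exact ⟨hle, sub_nonneg.mpr hle⟩

/-- Under the GP posterior setup, if the observations satisfy
`Y_i = ⟪φ(θ_i), w⟫ + ε_i` with `‖w‖ ≤ B` and `|ε_i| ≤ η`, then
`Yᵀ (K + η² I_N)⁻¹ Y ≤ B² + N`; in particular
`B² + N − Yᵀ (K + η² I_N)⁻¹ Y ≥ 0`, so the confidence-width parameter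
`β = √(B² + N − Yᵀ (K + η² I_N)⁻¹ Y)` is a well-defined nonnegative real. -/
theorem gp_quadratic_form_bound
    {Θ : Type*} [Nonempty Θ] {E : Type*}
    [NormedAddCommGroup E] [InnerProductSpace ℝ E] [CompleteSpace E]
    (φ : Θ → E) (k : Θ → Θ → ℝ)
    (hk : ∀ θ θ' : Θ, k θ θ' = ⟪φ θ, φ θ'⟫)
    {N : ℕ} (θi : Fin N → Θ)
    (K : Matrix (Fin N) (Fin N) ℝ)
    (hK : ∀ i j, K i j = k (θi i) (θi j))
    (η : ℝ) (hη : 0 < η)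
    (Y : Fin N → ℝ) (w : E) (B : ℝ) (hw : ‖w‖ ≤ B)
    (ε : Fin N → ℝ) (hε : ∀ i, |ε i| ≤ η)
    (hY : ∀ i, Y i = ⟪φ (θi i), w⟫ + ε i) :
    Y ⬝ᵥ ((K + η ^ 2 • 1)⁻¹ *ᵥ Y) ≤ B ^ 2 + N ∧
      0 ≤ B ^ 2 + N - Y ⬝ᵥ ((K + η ^ 2 • 1)⁻¹ *ᵥ Y) :=
  gp_quadratic_form_bound_general φ k hk θi K hK η hη Y w B hw ε hε hY
end

section
/- Under the GP posterior setup, work in the augmented Hilbert space E × ℝ^N with inner product ⟪(a, x), (b, y)⟫ = ⟪a, b⟫_E + xᵀy, and set ṽ_i = (φ(θ_i), η e_i), where e_i ∈ ℝ^N is the i-th standard basis vector. Then: (i) the Gram matrix of ṽ₁, …, ṽ_N equals K + η² I_N; and (ii) for every θ ∈ Θ, the squared distance of the point (φ(θ), 0) from span{ṽ₁, …, ṽ_N} equals the posterior variance, i.e., ‖(φ(θ), 0) − P (φ(θ), 0)‖² = σ²(θ), where P is the orthogonal projection onto span{ṽ₁, …, ṽ_N}. -/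
/-!
The Gram matrix of the `ṽ_i` splits as the Gram matrix `K` of the `φ(θ_i)` plus `η²` times the
Gram matrix of the orthonormal `e_i`, so it is positive definite and the `ṽ_i` are linearly
independent. For a linearly independent family with Gram matrix `G`, the projection of `w` onto
its span is `∑ cᵢ vᵢ` with `G c = b`, `bⱼ = ⟪vⱼ, w⟫` (the normal equations), so the squared
residual is `⟪w, w⟫ - bᵀ G⁻¹ b`. For `w = (φ(θ), 0)` one has `b = k*(θ)` and `⟪w, w⟫ = k(θ, θ)`.
-/

open Matrix RealInnerProductSpace

namespace Matrix

variable {ι : Type*}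

theorem gram_withLp_prod {F₁ F₂ : Type*} [NormedAddCommGroup F₁] [InnerProductSpace ℝ F₁]
    [NormedAddCommGroup F₂] [InnerProductSpace ℝ F₂] (a : ι → F₁) (b : ι → F₂) :
    gram ℝ (fun i ↦ WithLp.toLp 2 (a i, b i)) = gram ℝ a + gram ℝ b := by
  ext i j
  simp

section

variable {F : Type*} [NormedAddCommGroup F] [InnerProductSpace ℝ F]

theorem gram_smul (c : ℝ) (v : ι → F) : gram ℝ (fun i ↦ c • v i) = c ^ 2 • gram ℝ v := by
  ext i j
  simp [real_inner_smul_left, real_inner_smul_right, pow_two, mul_assoc]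

theorem inner_sum_smul_eq_gram_mulVec [Fintype ι] (v : ι → F) (c : ι → ℝ) (j : ι) :
    ⟪v j, ∑ i, c i • v i⟫ = (gram ℝ v *ᵥ c) j := by
  simp only [inner_sum, real_inner_smul_right, mulVec, dotProduct, gram_apply, mul_comm]

end

theorem gram_euclideanSpace_single [Fintype ι] [DecidableEq ι] :
    gram ℝ (fun i : ι ↦ EuclideanSpace.single i (1 : ℝ)) = 1 :=
  gram_eq_one_iff_orthonormal.mpr EuclideanSpace.orthonormal_single

end Matrix

namespace Submodule

variable {F : Type*} [NormedAddCommGroup F] [InnerProductSpace ℝ F]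
  {ι : Type*} [Fintype ι] [DecidableEq ι] {v : ι → F}

theorem starProjection_span_range_eq_sum_gram_inv (hv : LinearIndependent ℝ v) (w : F)
    [(span ℝ (Set.range v)).HasOrthogonalProjection] :
    (span ℝ (Set.range v)).starProjection w =
      ∑ i, ((gram ℝ v)⁻¹ *ᵥ fun j ↦ ⟪v j, w⟫) i • v i := by
  have hG : IsUnit (gram ℝ v).det :=
    isUnit_iff_ne_zero.mpr (det_gram_ne_zero_iff_linearIndependent.mpr hv)
  set p := ∑ i, ((gram ℝ v)⁻¹ *ᵥ fun j ↦ ⟪v j, w⟫) i • v i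
  have h_orth : ∀ j, ⟪v j, w - p⟫ = 0 := fun j ↦ by
    rw [inner_sub_right, inner_sum_smul_eq_gram_mulVec, mulVec_mulVec, mul_nonsing_inv _ hG,
      one_mulVec, sub_self]
  refine eq_starProjection_of_mem_of_inner_eq_zero
    (sum_mem fun i _ ↦ smul_mem _ _ (subset_span ⟨i, rfl⟩)) fun u hu ↦ ?_
  obtain ⟨a, rfl⟩ := (mem_span_range_iff_exists_fun ℝ).mp hu
  simp [inner_sum, real_inner_smul_right, real_inner_comm (v _), h_orth]

theorem norm_sub_starProjection_span_range_sq (hv : LinearIndependent ℝ v) (w : F)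
    [(span ℝ (Set.range v)).HasOrthogonalProjection] :
    ‖w - (span ℝ (Set.range v)).starProjection w‖ ^ 2 =
      ⟪w, w⟫ - (fun j ↦ ⟪v j, w⟫) ⬝ᵥ ((gram ℝ v)⁻¹ *ᵥ fun j ↦ ⟪v j, w⟫) := by
  set K := span ℝ (Set.range v)
  calc ‖w - K.starProjection w‖ ^ 2 = ⟪w - K.starProjection w, w⟫ := by
        rw [← real_inner_self_eq_norm_sq, inner_sub_right,
          K.starProjection_inner_eq_zero w _ (K.starProjection_apply_mem w), sub_zero]
    _ = _ := by
        rw [inner_sub_left, starProjection_span_range_eq_sum_gram_inv hv, sum_inner]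
        simp only [real_inner_smul_left, dotProduct, mul_comm]

end Submodule

theorem gp_augmented_gram_and_variance_general
    {Θ : Type*} {E : Type*}
    [NormedAddCommGroup E] [InnerProductSpace ℝ E]
    (φ : Θ → E) (k : Θ → Θ → ℝ)
    (hk : ∀ θ θ' : Θ, k θ θ' = ⟪φ θ, φ θ'⟫)
    {N : ℕ} (θi : Fin N → Θ)
    (K : Matrix (Fin N) (Fin N) ℝ)
    (hK : ∀ i j, K i j = k (θi i) (θi j))
    (kstar : Θ → Fin N → ℝ)
    (hkstar : ∀ θ i, kstar θ i = k θ (θi i))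
    (η : ℝ) (hη : 0 < η)
    (σsq : Θ → ℝ)
    (hσ : ∀ θ, σsq θ = k θ θ - kstar θ ⬝ᵥ ((K + η ^ 2 • 1)⁻¹ *ᵥ kstar θ))
    (vt : Fin N → WithLp 2 (E × EuclideanSpace ℝ (Fin N)))
    (hvt : ∀ i, vt i = (WithLp.equiv 2 (E × EuclideanSpace ℝ (Fin N))).symm
      (φ (θi i), η • EuclideanSpace.single i (1 : ℝ))) :
    (∀ i j, ⟪vt i, vt j⟫ = (K + η ^ 2 • 1) i j) ∧
      haveI : FiniteDimensional ℝ (Submodule.span ℝ (Set.range vt)) :=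
        FiniteDimensional.span_of_finite ℝ (Set.finite_range vt)
      ∀ θ : Θ,
        ‖(WithLp.equiv 2 (E × EuclideanSpace ℝ (Fin N))).symm (φ θ, 0) -
            (Submodule.orthogonalProjectionOnto (Submodule.span ℝ (Set.range vt))
              ((WithLp.equiv 2 (E × EuclideanSpace ℝ (Fin N))).symm (φ θ, 0)) :
              WithLp 2 (E × EuclideanSpace ℝ (Fin N)))‖ ^ 2 = σsq θ := by
  have hK_gram : K = gram ℝ (fun i ↦ φ (θi i)) := Matrix.ext fun i j ↦ (hK i j).trans (hk _ _)
  have h_gram : gram ℝ vt = K + η ^ 2 • 1 := by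
    simp only [funext hvt, WithLp.equiv_symm_apply, gram_withLp_prod, gram_smul,
      gram_euclideanSpace_single, hK_gram]
  have h_indep : LinearIndependent ℝ vt := linearIndependent_of_posDef_gram <|
    h_gram ▸ hK_gram ▸ PosDef.posSemidef_add (posSemidef_gram ℝ _) (PosDef.one.smul (pow_pos hη 2))
  refine ⟨fun i j ↦ by rw [← h_gram, gram_apply], fun θ ↦ ?_⟩
  rw [Submodule.coe_orthogonalProjectionOnto_apply,
    Submodule.norm_sub_starProjection_span_range_sq h_indep, h_gram, hσ]
  set w := (WithLp.equiv 2 (E × EuclideanSpace ℝ (Fin N))).symm (φ θ, 0)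
  have h_kstar : (fun j ↦ ⟪vt j, w⟫) = kstar θ := funext fun j ↦ by
    simp [w, hvt, hkstar, hk, real_inner_comm]
  have h_self : ⟪w, w⟫ = k θ θ := by simp [w, hk]
  rw [h_kstar, h_self]

/-- In the augmented Hilbert space `E × ℝ^N` (with the product
inner product), setting `ṽ_i = (φ(θ_i), η e_i)`: (i) the Gram matrix of the
`ṽ_i` equals `K + η² I_N`; and (ii) for every `θ`, the squared distance of
`(φ(θ), 0)` from `span{ṽ₁, …, ṽ_N}` equals the posterior variance `σ²(θ)`. -/
theorem gp_augmented_gram_and_variance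
    {Θ : Type*} [Nonempty Θ] {E : Type*}
    [NormedAddCommGroup E] [InnerProductSpace ℝ E] [CompleteSpace E]
    (φ : Θ → E) (k : Θ → Θ → ℝ)
    (hk : ∀ θ θ' : Θ, k θ θ' = ⟪φ θ, φ θ'⟫)
    {N : ℕ} (θi : Fin N → Θ)
    (K : Matrix (Fin N) (Fin N) ℝ)
    (hK : ∀ i j, K i j = k (θi i) (θi j))
    (kstar : Θ → Fin N → ℝ)
    (hkstar : ∀ θ i, kstar θ i = k θ (θi i))
    (η : ℝ) (hη : 0 < η)
    (σsq : Θ → ℝ)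
    (hσ : ∀ θ, σsq θ = k θ θ - kstar θ ⬝ᵥ ((K + η ^ 2 • 1)⁻¹ *ᵥ kstar θ))
    (vt : Fin N → WithLp 2 (E × EuclideanSpace ℝ (Fin N)))
    (hvt : ∀ i, vt i = (WithLp.equiv 2 (E × EuclideanSpace ℝ (Fin N))).symm
      (φ (θi i), η • EuclideanSpace.single i (1 : ℝ))) :
    (∀ i j, ⟪vt i, vt j⟫ = (K + η ^ 2 • 1) i j) ∧
      haveI : FiniteDimensional ℝ (Submodule.span ℝ (Set.range vt)) :=
        FiniteDimensional.span_of_finite ℝ (Set.finite_range vt)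
      ∀ θ : Θ,
        ‖(WithLp.equiv 2 (E × EuclideanSpace ℝ (Fin N))).symm (φ θ, 0) -
            (Submodule.orthogonalProjectionOnto (Submodule.span ℝ (Set.range vt))
              ((WithLp.equiv 2 (E × EuclideanSpace ℝ (Fin N))).symm (φ θ, 0)) :
              WithLp 2 (E × EuclideanSpace ℝ (Fin N)))‖ ^ 2 = σsq θ :=
  gp_augmented_gram_and_variance_general φ k hk θi K hK kstar hkstar η hη σsq hσ vt hvt
end

section
/- Under the GP posterior setup, suppose Y_i = ⟪φ(θ_i), w⟫ + ε_i for some w ∈ E and noise vector ε ∈ ℝ^N. In the augmented Hilbert space E × ℝ^N with inner product ⟪(a, x), (b, y)⟫ = ⟪a, b⟫_E + xᵀy, set ṽ_i = (φ(θ_i), η e_i) and w̃ = (w, η⁻¹ ε). Then Y_i = ⟪ṽ_i, w̃⟫ for all i, ‖w̃‖² = ‖w‖² + η⁻² Σ_{i=1}^N ε_i², and the GP posterior mean is the evaluation of w̃ against the projected test feature: μ(θ) = ⟪P (φ(θ), 0), w̃⟫ for every θ ∈ Θ, where P is the orthogonal projection onto span{ṽ₁, …, ṽ_N}. -/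
/-! The Gram matrix of the augmented features `ṽ i` is `K + η² I`, which is positive definite,
so the normal equations for projecting `(φ θ, 0)` onto their span read `(K + η² I) c = k*(θ)`.
Pairing the projection `∑ i, c i • ṽ i` with `w̃` and using `⟪ṽ i, w̃⟫ = Y i` gives
`k*(θ)ᵀ (K + η² I)⁻¹ Y`. -/

open Matrix RealInnerProductSpace

section GramProjection

variable {F ι : Type*} [NormedAddCommGroup F] [InnerProductSpace ℝ F] [Fintype ι]

theorem Submodule.starProjection_span_range_eq_sum {v : ι → F}
    [(Submodule.span ℝ (Set.range v)).HasOrthogonalProjection] {u : F} {c : ι → ℝ}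
    (hc : gram ℝ v *ᵥ c = fun j => ⟪v j, u⟫) :
    (Submodule.span ℝ (Set.range v)).starProjection u = ∑ i, c i • v i := by
  refine Submodule.eq_starProjection_of_mem_of_inner_eq_zero
    (Submodule.sum_mem _ fun i _ => Submodule.smul_mem _ _ (Submodule.subset_span ⟨i, rfl⟩))
    fun x hx => ?_
  have hv : ∀ j, ⟪v j, ∑ i, c i • v i⟫ = ⟪v j, u⟫ := fun j => by
    simp only [inner_sum, real_inner_smul_right, ← congrFun hc j, mulVec, dotProduct,
      gram_apply, mul_comm]
  suffices Submodule.span ℝ (Set.range v) ≤ LinearMap.ker (innerₛₗ ℝ (u - ∑ i, c i • v i)) from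
    this hx
  refine Submodule.span_le.2 (Set.range_subset_iff.2 fun j => ?_)
  rw [SetLike.mem_coe, LinearMap.mem_ker, innerₛₗ_apply_apply, real_inner_comm, inner_sub_right,
    hv j, sub_self]

theorem Submodule.inner_starProjection_span_range {v : ι → F} [DecidableEq ι]
    [(Submodule.span ℝ (Set.range v)).HasOrthogonalProjection]
    (hv : IsUnit (gram ℝ v).det) (u w : F) :
    ⟪(Submodule.span ℝ (Set.range v)).starProjection u, w⟫ =
      (fun j => ⟪v j, u⟫) ⬝ᵥ ((gram ℝ v)⁻¹ *ᵥ fun i => ⟪v i, w⟫) := by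
  have hsymm : (gram ℝ v)⁻¹ᵀ = (gram ℝ v)⁻¹ := by
    rw [transpose_nonsing_inv, ← conjTranspose_eq_transpose_of_trivial,
      (isHermitian_gram ℝ v).eq]
  rw [Submodule.starProjection_span_range_eq_sum
      (c := (gram ℝ v)⁻¹ *ᵥ fun j => ⟪v j, u⟫)
      (by rw [mulVec_mulVec, mul_nonsing_inv _ hv, one_mulVec]),
    dotProduct_mulVec, ← mulVec_transpose, hsymm, sum_inner]
  simp only [real_inner_smul_left, dotProduct]

end GramProjection

section AugmentedSpace

variable {ι E F : Type*} [NormedAddCommGroup E] [InnerProductSpace ℝ E]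
  [NormedAddCommGroup F] [InnerProductSpace ℝ F]

theorem Matrix.gram_toLp_prod (a : ι → E) (b : ι → F) :
    gram ℝ (fun i => WithLp.toLp 2 (a i, b i)) = gram ℝ a + gram ℝ b := by
  ext i j
  simp [WithLp.prod_inner_apply]

theorem Matrix.gram_smul_euclideanSpace_single [Fintype ι] [DecidableEq ι] (η : ℝ) :
    gram ℝ (fun i => η • EuclideanSpace.single i (1 : ℝ)) = η ^ 2 • (1 : Matrix ι ι ℝ) := by
  ext i j
  simp only [gram_apply, real_inner_smul_left, real_inner_smul_right,
    EuclideanSpace.inner_single_left]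
  simp [one_apply, sq]

end AugmentedSpace

theorem gp_augmented_observation_and_mean_general
    {Θ : Type*} {E : Type*}
    [NormedAddCommGroup E] [InnerProductSpace ℝ E]
    (φ : Θ → E) (k : Θ → Θ → ℝ)
    (hk : ∀ θ θ' : Θ, k θ θ' = ⟪φ θ, φ θ'⟫)
    {N : ℕ} (θi : Fin N → Θ)
    (K : Matrix (Fin N) (Fin N) ℝ)
    (hK : ∀ i j, K i j = k (θi i) (θi j))
    (kstar : Θ → Fin N → ℝ)
    (hkstar : ∀ θ i, kstar θ i = k θ (θi i))
    (η : ℝ) (hη : 0 < η)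
    (Y : Fin N → ℝ) (w : E) (ε : Fin N → ℝ)
    (hY : ∀ i, Y i = ⟪φ (θi i), w⟫ + ε i)
    (μ : Θ → ℝ)
    (hμ : ∀ θ, μ θ = kstar θ ⬝ᵥ ((K + η ^ 2 • 1)⁻¹ *ᵥ Y))
    (vt : Fin N → WithLp 2 (E × EuclideanSpace ℝ (Fin N)))
    (hvt : ∀ i, vt i = (WithLp.equiv 2 (E × EuclideanSpace ℝ (Fin N))).symm
      (φ (θi i), η • EuclideanSpace.single i (1 : ℝ)))
    (wt : WithLp 2 (E × EuclideanSpace ℝ (Fin N)))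
    (hwt : wt = (WithLp.equiv 2 (E × EuclideanSpace ℝ (Fin N))).symm
      (w, η⁻¹ • (WithLp.toLp 2 ε : EuclideanSpace ℝ (Fin N)))) :
    (∀ i, Y i = ⟪vt i, wt⟫) ∧
      ‖wt‖ ^ 2 = ‖w‖ ^ 2 + η⁻¹ ^ 2 * ∑ i, ε i ^ 2 ∧
      haveI : FiniteDimensional ℝ (Submodule.span ℝ (Set.range vt)) :=
        FiniteDimensional.span_of_finite ℝ (Set.finite_range vt)
      ∀ θ : Θ,
        μ θ = ⟪(Submodule.orthogonalProjection (Submodule.span ℝ (Set.range vt))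
            ((WithLp.equiv 2 (E × EuclideanSpace ℝ (Fin N))).symm (φ θ, 0)) :
            WithLp 2 (E × EuclideanSpace ℝ (Fin N))), wt⟫ := by
  have hobs : ∀ i, Y i = ⟪vt i, wt⟫ := fun i => by
    simp [hvt, hwt, hY, WithLp.prod_inner_apply, real_inner_smul_left, real_inner_smul_right,
      EuclideanSpace.inner_single_left, hη.ne']
  have hK_gram : K = gram ℝ (φ ∘ θi) := by ext i j; simp [hK, hk]
  have hgram : gram ℝ vt = K + η ^ 2 • 1 := by
    simp only [funext hvt, WithLp.equiv_symm_apply, gram_toLp_prod,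
      gram_smul_euclideanSpace_single, hK_gram, Function.comp_def]
  have hpd : (gram ℝ vt).PosDef := by
    rw [hgram, hK_gram]
    exact PosDef.posSemidef_add (posSemidef_gram ℝ _) (PosDef.one.smul (by positivity))
  have := FiniteDimensional.span_of_finite ℝ (Set.finite_range vt)
  refine ⟨hobs, ?_, fun θ => ?_⟩
  · simp [hwt, WithLp.prod_norm_sq_eq_of_L2, norm_smul, mul_pow, EuclideanSpace.real_norm_sq_eq]
  · rw [← Submodule.starProjection_apply, Submodule.inner_starProjection_span_range
      ((isUnit_iff_isUnit_det _).1 hpd.isUnit), hgram, hμ]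
    congr 1
    · ext j; simp [hvt, WithLp.prod_inner_apply, hkstar, hk, real_inner_comm]
    · exact congrArg _ (funext hobs)

/-- With `Y_i = ⟪φ(θ_i), w⟫ + ε_i`, in the augmented Hilbert space
`E × ℝ^N` with `ṽ_i = (φ(θ_i), η e_i)` and `w̃ = (w, η⁻¹ ε)`:
`Y_i = ⟪ṽ_i, w̃⟫` for all `i`, `‖w̃‖² = ‖w‖² + η⁻² Σ ε_i²`, and the GP posterior
mean satisfies `μ(θ) = ⟪P (φ(θ), 0), w̃⟫` for every `θ`, where `P` is the
orthogonal projection onto `span{ṽ₁, …, ṽ_N}`. -/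
theorem gp_augmented_observation_and_mean
    {Θ : Type*} [Nonempty Θ] {E : Type*}
    [NormedAddCommGroup E] [InnerProductSpace ℝ E] [CompleteSpace E]
    (φ : Θ → E) (k : Θ → Θ → ℝ)
    (hk : ∀ θ θ' : Θ, k θ θ' = ⟪φ θ, φ θ'⟫)
    {N : ℕ} (θi : Fin N → Θ)
    (K : Matrix (Fin N) (Fin N) ℝ)
    (hK : ∀ i j, K i j = k (θi i) (θi j))
    (kstar : Θ → Fin N → ℝ)
    (hkstar : ∀ θ i, kstar θ i = k θ (θi i))
    (η : ℝ) (hη : 0 < η)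
    (Y : Fin N → ℝ) (w : E) (ε : Fin N → ℝ)
    (hY : ∀ i, Y i = ⟪φ (θi i), w⟫ + ε i)
    (μ : Θ → ℝ)
    (hμ : ∀ θ, μ θ = kstar θ ⬝ᵥ ((K + η ^ 2 • 1)⁻¹ *ᵥ Y))
    (vt : Fin N → WithLp 2 (E × EuclideanSpace ℝ (Fin N)))
    (hvt : ∀ i, vt i = (WithLp.equiv 2 (E × EuclideanSpace ℝ (Fin N))).symm
      (φ (θi i), η • EuclideanSpace.single i (1 : ℝ)))
    (wt : WithLp 2 (E × EuclideanSpace ℝ (Fin N)))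
    (hwt : wt = (WithLp.equiv 2 (E × EuclideanSpace ℝ (Fin N))).symm
      (w, η⁻¹ • (WithLp.toLp 2 ε : EuclideanSpace ℝ (Fin N)))) :
    (∀ i, Y i = ⟪vt i, wt⟫) ∧
      ‖wt‖ ^ 2 = ‖w‖ ^ 2 + η⁻¹ ^ 2 * ∑ i, ε i ^ 2 ∧
      haveI : FiniteDimensional ℝ (Submodule.span ℝ (Set.range vt)) :=
        FiniteDimensional.span_of_finite ℝ (Set.finite_range vt)
      ∀ θ : Θ,
        μ θ = ⟪(Submodule.orthogonalProjection (Submodule.span ℝ (Set.range vt))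
            ((WithLp.equiv 2 (E × EuclideanSpace ℝ (Fin N))).symm (φ θ, 0)) :
            WithLp 2 (E × EuclideanSpace ℝ (Fin N))), wt⟫ :=
  gp_augmented_observation_and_mean_general φ k hk θi K hK kstar hkstar η hη Y w ε hY μ hμ vt hvt wt
    hwt
end

section
/- (Theorem 1, part 1, concrete form for a fixed dataset.) Let Θ be a nonempty set, and for each of two functions let the GP posterior setup hold: real Hilbert spaces E_g, E_s, feature maps φ_g : Θ → E_g and φ_s : Θ → E_s with kernels k_g, k_s, vectors w_g ∈ E_g and w_s ∈ E_s with ‖w_g‖ ≤ B_g, ‖w_s‖ ≤ B_s, defining g(θ) = ⟪φ_g(θ), w_g⟫ and s(θ) = ⟪φ_s(θ), w_s⟫. Fix training inputs θ₁, …, θ_N and observations Y^g_i = g(θ_i) + ε^g_i, Y^s_i = s(θ_i) + ε^s_i with |ε^g_i| ≤ η_g and |ε^s_i| ≤ η_s for noise levels η_g, η_s > 0. Let μ_g, σ_g (resp. μ_s, σ_s) be the GP posterior mean and standard deviation built from (φ_g, η_g, Y^g) (resp. (φ_s, η_s, Y^s)), and set β_g = √(B_g² + N − (Y^g)ᵀ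 (K_g + η_g² I_N)⁻¹ Y^g) and β_s = √(B_s² + N − (Y^s)ᵀ (K_s + η_s² I_N)⁻¹ Y^s), where K_g, K_s are the Gram matrices of the training inputs under k_g, k_s. Then every θ ∈ Θ with μ_g(θ) − β_g σ_g(θ) > 0 and μ_s(θ) − β_s σ_s(θ) > 0 satisfies g(θ) > 0 and s(θ) > 0. -/
open Matrix RealInnerProductSpace

/-!
Append to the `i`-th training feature the vector `η eᵢ ∈ ℝᴺ`. The augmented features have Gram
matrix `K + η² I`; the test point becomes `(x, 0)` and the weight becomes `(w, ε / η)`, whose inner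
products with the augmented features are exactly the noisy observations and whose squared norm is
at most `B² + N`. If `r` denotes the residual of the orthogonal projection onto the span of the
augmented features, then `g(x) - μ(x) = ⟪r (x, 0), r (w, ε / η)⟫`, `‖r (x, 0)‖ = σ(x)` and
`‖r (w, ε / η)‖ ≤ β`, so Cauchy–Schwarz gives `|g(x) - μ(x)| ≤ β σ(x)`.
-/

namespace Matrix

variable {F : Type*} [NormedAddCommGroup F] [InnerProductSpace ℝ F]
  {ι : Type*} [Fintype ι] [DecidableEq ι]

noncomputable def gramResidual (a : ι → F) (x : F) : F :=
  x - ∑ i, ((gram ℝ a)⁻¹ *ᵥ fun j => ⟪x, a j⟫) i • a i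

variable {a : ι → F}

lemma inner_gramResidual_left (ha : LinearIndependent ℝ a) (x : F) (j : ι) :
    ⟪gramResidual a x, a j⟫ = 0 := by
  have hdet : IsUnit (gram ℝ a).det :=
    isUnit_iff_ne_zero.2 (det_gram_ne_zero_iff_linearIndependent.2 ha)
  have hsum : ∀ c : ι → ℝ, ⟪∑ i, c i • a i, a j⟫ = (gram ℝ a *ᵥ c) j := by
    intro c
    rw [real_inner_comm, inner_sum]
    simp only [real_inner_smul_right, mulVec, dotProduct, gram_apply, mul_comm]
  rw [gramResidual, inner_sub_left, hsum, mulVec_mulVec, mul_nonsing_inv _ hdet, one_mulVec,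
    sub_self]

lemma inner_gramResidual (ha : LinearIndependent ℝ a) (x y : F) :
    ⟪gramResidual a x, gramResidual a y⟫ =
      ⟪x, y⟫ - (fun i => ⟪x, a i⟫) ⬝ᵥ ((gram ℝ a)⁻¹ *ᵥ fun i => ⟪y, a i⟫) := by
  have hfit : ⟪∑ i, ((gram ℝ a)⁻¹ *ᵥ fun j => ⟪x, a j⟫) i • a i, gramResidual a y⟫ = 0 := by
    simp only [sum_inner, real_inner_smul_left, real_inner_comm _ (a _),
      inner_gramResidual_left ha, mul_zero, Finset.sum_const_zero]
  rw [gramResidual, inner_sub_left, hfit, sub_zero, gramResidual, inner_sub_right, inner_sum]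
  simp only [real_inner_smul_right, dotProduct, mul_comm]

theorem abs_inner_sub_gram_inv_le (ha : LinearIndependent ℝ a) (x y : F) :
    |⟪x, y⟫ - (fun i => ⟪x, a i⟫) ⬝ᵥ ((gram ℝ a)⁻¹ *ᵥ fun i => ⟪y, a i⟫)| ≤
      √(⟪x, x⟫ - (fun i => ⟪x, a i⟫) ⬝ᵥ ((gram ℝ a)⁻¹ *ᵥ fun i => ⟪x, a i⟫)) *
      √(⟪y, y⟫ - (fun i => ⟪y, a i⟫) ⬝ᵥ ((gram ℝ a)⁻¹ *ᵥ fun i => ⟪y, a i⟫)) := by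
  simp only [← inner_gramResidual ha, ← norm_eq_sqrt_real_inner]
  exact abs_real_inner_le_norm _ _

end Matrix

section RegularizedFeature

variable {ι : Type*} [Fintype ι] [DecidableEq ι] {E : Type*} [NormedAddCommGroup E]
  [InnerProductSpace ℝ E]

noncomputable def regularizedFeature (ψ : ι → E) (η : ℝ) (i : ι) :
    WithLp 2 (E × EuclideanSpace ℝ ι) :=
  WithLp.toLp 2 (ψ i, η • EuclideanSpace.single i 1)

lemma gram_regularizedFeature (ψ : ι → E) (η : ℝ) :
    gram ℝ (regularizedFeature ψ η) = gram ℝ ψ + η ^ 2 • 1 := by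
  ext i j
  simp only [gram_apply, regularizedFeature, WithLp.prod_inner_apply,
    real_inner_smul_right, EuclideanSpace.inner_single_right]
  by_cases hij : i = j
  · subst hij; simp [sq]
  · simp [hij]

lemma linearIndependent_regularizedFeature (ψ : ι → E) {η : ℝ} (hη : η ≠ 0) :
    LinearIndependent ℝ (regularizedFeature ψ η) := by
  rw [← posDef_gram_iff_linearIndependent, gram_regularizedFeature]
  exact PosDef.posSemidef_add (posSemidef_gram ℝ ψ) (PosDef.one.smul (by positivity))

theorem abs_inner_sub_gpMean_le (ψ : ι → E) {η : ℝ} (hη : 0 < η) {w : E} {B : ℝ} (hw : ‖w‖ ≤ B)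
    {ε Y : ι → ℝ} (hε : ∀ i, |ε i| ≤ η) (hY : ∀ i, Y i = ⟪ψ i, w⟫ + ε i) (x : E) :
    |⟪x, w⟫ - (fun i => ⟪x, ψ i⟫) ⬝ᵥ ((gram ℝ ψ + η ^ 2 • 1)⁻¹ *ᵥ Y)| ≤
      √(B ^ 2 + Fintype.card ι - Y ⬝ᵥ ((gram ℝ ψ + η ^ 2 • 1)⁻¹ *ᵥ Y)) *
      √(⟪x, x⟫ - (fun i => ⟪x, ψ i⟫) ⬝ᵥ
        ((gram ℝ ψ + η ^ 2 • 1)⁻¹ *ᵥ fun i => ⟪x, ψ i⟫)) := by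
  set a := regularizedFeature ψ η
  set x' : WithLp 2 (E × EuclideanSpace ℝ ι) := WithLp.toLp 2 (x, 0)
  set w' : WithLp 2 (E × EuclideanSpace ℝ ι) := WithLp.toLp 2 (w, WithLp.toLp 2 fun i => ε i / η)
  have hx'a : (fun i => ⟪x', a i⟫) = fun i => ⟪x, ψ i⟫ := by
    funext i; simp [x', a, regularizedFeature]
  have hw'a : (fun i => ⟪w', a i⟫) = Y := by
    funext i
    simp [w', a, regularizedFeature, hY, real_inner_comm w, real_inner_smul_right,
      EuclideanSpace.inner_single_right, mul_div_cancel₀ _ hη.ne']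
  have hx'x' : ⟪x', x'⟫ = ⟪x, x⟫ := by simp [x']
  have hx'w' : ⟪x', w'⟫ = ⟪x, w⟫ := by simp [x', w']
  have hw'w' : ⟪w', w'⟫ ≤ B ^ 2 + Fintype.card ι := by
    have hnoise : ∀ i, (ε i / η) ^ 2 ≤ 1 := fun i => by
      rw [sq_le_one_iff_abs_le_one, abs_div, abs_of_pos hη, div_le_one hη]
      exact hε i
    calc ⟪w', w'⟫ = ‖w‖ ^ 2 + ∑ i, (ε i / η) ^ 2 := by
          rw [WithLp.prod_inner_apply, PiLp.inner_apply]
          simp only [w', real_inner_self_eq_norm_sq, Real.norm_eq_abs, sq_abs]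
      _ ≤ B ^ 2 + ∑ _i : ι, 1 := by
          gcongr with i
          exact hnoise i
      _ = B ^ 2 + Fintype.card ι := by simp
  have key := abs_inner_sub_gram_inv_le (linearIndependent_regularizedFeature ψ hη.ne') x' w'
  rw [hx'a, hw'a, hx'x', hx'w', gram_regularizedFeature, mul_comm] at key
  refine key.trans (mul_le_mul_of_nonneg_right (Real.sqrt_le_sqrt ?_) (Real.sqrt_nonneg _))
  linarith

end RegularizedFeature

theorem gp_lower_confidence_bound_le {Θ E : Type*} [NormedAddCommGroup E] [InnerProductSpace ℝ E]
    (φ : Θ → E) (k : Θ → Θ → ℝ) (hk : ∀ θ θ' : Θ, k θ θ' = ⟪φ θ, φ θ'⟫)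
    {w : E} {B : ℝ} (hw : ‖w‖ ≤ B) (f : Θ → ℝ) (hf : ∀ θ, f θ = ⟪φ θ, w⟫)
    {N : ℕ} (θi : Fin N → Θ)
    (K : Matrix (Fin N) (Fin N) ℝ) (hK : ∀ i j, K i j = k (θi i) (θi j))
    (kstar : Θ → Fin N → ℝ) (hkstar : ∀ θ i, kstar θ i = k θ (θi i))
    {η : ℝ} (hη : 0 < η) {Y ε : Fin N → ℝ}
    (hε : ∀ i, |ε i| ≤ η) (hY : ∀ i, Y i = f (θi i) + ε i) (θ : Θ) :
    kstar θ ⬝ᵥ ((K + η ^ 2 • 1)⁻¹ *ᵥ Y) -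
        √(B ^ 2 + N - Y ⬝ᵥ ((K + η ^ 2 • 1)⁻¹ *ᵥ Y)) *
        √(k θ θ - kstar θ ⬝ᵥ ((K + η ^ 2 • 1)⁻¹ *ᵥ kstar θ)) ≤ f θ := by
  have hK_gram : K = gram ℝ (φ ∘ θi) := ext fun i j => (hK i j).trans (hk _ _)
  have hkstar_inner : kstar θ = fun i => ⟪φ θ, (φ ∘ θi) i⟫ :=
    funext fun i => (hkstar θ i).trans (hk _ _)
  have hbound := abs_inner_sub_gpMean_le (φ ∘ θi) hη hw hε
    (fun i => (hY i).trans (by rw [hf]; rfl)) (φ θ)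
  rw [Fintype.card_fin, ← hK_gram, ← hkstar_inner, ← hk, ← hf] at hbound
  linarith [(abs_le.mp hbound).1]

theorem gp_safe_convergent_parameter_set_general
    {Θ : Type*}
    {Eg : Type*} [NormedAddCommGroup Eg] [InnerProductSpace ℝ Eg]
    {Es : Type*} [NormedAddCommGroup Es] [InnerProductSpace ℝ Es]
    (φg : Θ → Eg) (φs : Θ → Es)
    (kg : Θ → Θ → ℝ) (hkg : ∀ θ θ' : Θ, kg θ θ' = ⟪φg θ, φg θ'⟫)
    (ks : Θ → Θ → ℝ) (hks : ∀ θ θ' : Θ, ks θ θ' = ⟪φs θ, φs θ'⟫)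
    (wg : Eg) (ws : Es) (Bg Bs : ℝ) (hwg : ‖wg‖ ≤ Bg) (hws : ‖ws‖ ≤ Bs)
    (g s : Θ → ℝ)
    (hg : ∀ θ, g θ = ⟪φg θ, wg⟫) (hs : ∀ θ, s θ = ⟪φs θ, ws⟫)
    {N : ℕ} (θi : Fin N → Θ)
    (Kg : Matrix (Fin N) (Fin N) ℝ) (hKg : ∀ i j, Kg i j = kg (θi i) (θi j))
    (Ks : Matrix (Fin N) (Fin N) ℝ) (hKs : ∀ i j, Ks i j = ks (θi i) (θi j))
    (kstarg : Θ → Fin N → ℝ) (hkstarg : ∀ θ i, kstarg θ i = kg θ (θi i))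
    (kstars : Θ → Fin N → ℝ) (hkstars : ∀ θ i, kstars θ i = ks θ (θi i))
    (ηg ηs : ℝ) (hηg : 0 < ηg) (hηs : 0 < ηs)
    (Yg Ys : Fin N → ℝ) (εg εs : Fin N → ℝ)
    (hεg : ∀ i, |εg i| ≤ ηg) (hεs : ∀ i, |εs i| ≤ ηs)
    (hYg : ∀ i, Yg i = g (θi i) + εg i) (hYs : ∀ i, Ys i = s (θi i) + εs i)
    (μg μs σg σs : Θ → ℝ)
    (hμg : ∀ θ, μg θ = kstarg θ ⬝ᵥ ((Kg + ηg ^ 2 • 1)⁻¹ *ᵥ Yg))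
    (hμs : ∀ θ, μs θ = kstars θ ⬝ᵥ ((Ks + ηs ^ 2 • 1)⁻¹ *ᵥ Ys))
    (hσg : ∀ θ, σg θ =
      Real.sqrt (kg θ θ - kstarg θ ⬝ᵥ ((Kg + ηg ^ 2 • 1)⁻¹ *ᵥ kstarg θ)))
    (hσs : ∀ θ, σs θ =
      Real.sqrt (ks θ θ - kstars θ ⬝ᵥ ((Ks + ηs ^ 2 • 1)⁻¹ *ᵥ kstars θ)))
    (βg βs : ℝ)
    (hβg : βg = Real.sqrt (Bg ^ 2 + N - Yg ⬝ᵥ ((Kg + ηg ^ 2 • 1)⁻¹ *ᵥ Yg)))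
    (hβs : βs = Real.sqrt (Bs ^ 2 + N - Ys ⬝ᵥ ((Ks + ηs ^ 2 • 1)⁻¹ *ᵥ Ys))) :
    ∀ θ : Θ, 0 < μg θ - βg * σg θ → 0 < μs θ - βs * σs θ →
      0 < g θ ∧ 0 < s θ := by
  intro θ hgθ hsθ
  rw [hμg, hβg, hσg] at hgθ
  rw [hμs, hβs, hσs] at hsθ
  exact ⟨hgθ.trans_le (gp_lower_confidence_bound_le φg kg hkg hwg g hg θi Kg hKg kstarg hkstarg
      hηg hεg hYg θ),
    hsθ.trans_le (gp_lower_confidence_bound_le φs ks hks hws s hs θi Ks hKs kstars hkstars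
      hηs hεs hYs θ)⟩

/-- Theorem 1, part 1, concrete form for a fixed dataset:
With GP posterior setups for the convergence index `g(θ) = ⟪φ_g(θ), w_g⟫` and
the safety index `s(θ) = ⟪φ_s(θ), w_s⟫` (RKHS norm bounds `B_g`, `B_s`, noisy
observations with noise bounded by `η_g`, `η_s`, and confidence widths
`β_g = √(B_g² + N − (Y^g)ᵀ (K_g + η_g² I)⁻¹ Y^g)` and analogously `β_s`),
every `θ` with `μ_g(θ) − β_g σ_g(θ) > 0` and `μ_s(θ) − β_s σ_s(θ) > 0`
satisfies `g(θ) > 0` and `s(θ) > 0`. -/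
theorem gp_safe_convergent_parameter_set
    {Θ : Type*} [Nonempty Θ]
    {Eg : Type*} [NormedAddCommGroup Eg] [InnerProductSpace ℝ Eg] [CompleteSpace Eg]
    {Es : Type*} [NormedAddCommGroup Es] [InnerProductSpace ℝ Es] [CompleteSpace Es]
    (φg : Θ → Eg) (φs : Θ → Es)
    (kg : Θ → Θ → ℝ) (hkg : ∀ θ θ' : Θ, kg θ θ' = ⟪φg θ, φg θ'⟫)
    (ks : Θ → Θ → ℝ) (hks : ∀ θ θ' : Θ, ks θ θ' = ⟪φs θ, φs θ'⟫)
    (wg : Eg) (ws : Es) (Bg Bs : ℝ) (hwg : ‖wg‖ ≤ Bg) (hws : ‖ws‖ ≤ Bs)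
    (g s : Θ → ℝ)
    (hg : ∀ θ, g θ = ⟪φg θ, wg⟫) (hs : ∀ θ, s θ = ⟪φs θ, ws⟫)
    {N : ℕ} (θi : Fin N → Θ)
    (Kg : Matrix (Fin N) (Fin N) ℝ) (hKg : ∀ i j, Kg i j = kg (θi i) (θi j))
    (Ks : Matrix (Fin N) (Fin N) ℝ) (hKs : ∀ i j, Ks i j = ks (θi i) (θi j))
    (kstarg : Θ → Fin N → ℝ) (hkstarg : ∀ θ i, kstarg θ i = kg θ (θi i))
    (kstars : Θ → Fin N → ℝ) (hkstars : ∀ θ i, kstars θ i = ks θ (θi i))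
    (ηg ηs : ℝ) (hηg : 0 < ηg) (hηs : 0 < ηs)
    (Yg Ys : Fin N → ℝ) (εg εs : Fin N → ℝ)
    (hεg : ∀ i, |εg i| ≤ ηg) (hεs : ∀ i, |εs i| ≤ ηs)
    (hYg : ∀ i, Yg i = g (θi i) + εg i) (hYs : ∀ i, Ys i = s (θi i) + εs i)
    (μg μs σg σs : Θ → ℝ)
    (hμg : ∀ θ, μg θ = kstarg θ ⬝ᵥ ((Kg + ηg ^ 2 • 1)⁻¹ *ᵥ Yg))
    (hμs : ∀ θ, μs θ = kstars θ ⬝ᵥ ((Ks + ηs ^ 2 • 1)⁻¹ *ᵥ Ys))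
    (hσg : ∀ θ, σg θ =
      Real.sqrt (kg θ θ - kstarg θ ⬝ᵥ ((Kg + ηg ^ 2 • 1)⁻¹ *ᵥ kstarg θ)))
    (hσs : ∀ θ, σs θ =
      Real.sqrt (ks θ θ - kstars θ ⬝ᵥ ((Ks + ηs ^ 2 • 1)⁻¹ *ᵥ kstars θ)))
    (βg βs : ℝ)
    (hβg : βg = Real.sqrt (Bg ^ 2 + N - Yg ⬝ᵥ ((Kg + ηg ^ 2 • 1)⁻¹ *ᵥ Yg)))
    (hβs : βs = Real.sqrt (Bs ^ 2 + N - Ys ⬝ᵥ ((Ks + ηs ^ 2 • 1)⁻¹ *ᵥ Ys))) :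
    ∀ θ : Θ, 0 < μg θ - βg * σg θ → 0 < μs θ - βs * σs θ →
      0 < g θ ∧ 0 < s θ :=
  gp_safe_convergent_parameter_set_general φg φs kg hkg ks hks wg ws Bg Bs hwg hws g s hg hs θi Kg
    hKg Ks hKs kstarg hkstarg kstars hkstars ηg ηs hηg hηs Yg Ys εg εs hεg hεs hYg hYs μg μs σg σs
    hμg hμs hσg hσs βg βs hβg hβs
end
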